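/- For the Hénon–Heiles system with potential V(q₁,q₂)=q₁(a q₂²+b q₁²), the bivector P̂ with entries P̂^{ij}=H^{2/3}·P̃^{ij} satisfies the Jacobi identity on the open set {x∈ℝ⁴ : H(x)>0}: for all indices i,j,k, Σ_l ( P̂^{li} ∂P̂^{jk}/∂x^l + P̂^{lj} ∂P̂^{ki}/∂x^l + P̂^{lk} ∂P̂^{ij}/∂x^l ) = 0; hence P̂ is a Poisson bivector there. -/

import Mathlib

open Real

noncomputable section

/-- Partial derivative of `F` in the `k`-th coordinate direction at `x`. -/
def pd (F : (Fin 4 → ℝ) → ℝ) (k : Fin 4) (x : Fin 4 → ℝ) : ℝ :=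
  fderiv ℝ F x (Pi.single k 1)

/-- The canonical Poisson bivector on ℝ⁴. -/
def Pcan : Matrix (Fin 4) (Fin 4) ℝ :=
  !![0, 0, 1, 0; 0, 0, 0, 1; -1, 0, 0, 0; 0, -1, 0, 0]

/-- Lie derivative of a bivector field `T` along a vector field `Xf`:
`(L_X T)^{ij} = Σ_k ( X^k ∂T^{ij}/∂x^k − T^{kj} ∂X^i/∂x^k − T^{ik} ∂X^j/∂x^k )`. -/
def lieDerivBiv (Xf : (Fin 4 → ℝ) → Fin 4 → ℝ)
    (T : (Fin 4 → ℝ) → Matrix (Fin 4) (Fin 4) ℝ)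
    (i j : Fin 4) (x : Fin 4 → ℝ) : ℝ :=
  ∑ k, (Xf x k * pd (fun y => T y i j) k x
      - T x k j * pd (fun y => Xf y i) k x
      - T x i k * pd (fun y => Xf y j) k x)

/-- Lie derivative of a 2-form `ω` along a vector field `Xf`:
`(L_X ω)_{ij} = Σ_k ( X^k ∂ω_{ij}/∂x^k + ω_{kj} ∂X^k/∂x^i + ω_{ik} ∂X^k/∂x^j )`. -/
def lieDerivForm (Xf : (Fin 4 → ℝ) → Fin 4 → ℝ)
    (ω : (Fin 4 → ℝ) → Matrix (Fin 4) (Fin 4) ℝ)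
    (i j : Fin 4) (x : Fin 4 → ℝ) : ℝ :=
  ∑ k, (Xf x k * pd (fun y => ω y i j) k x
      + ω x k j * pd (fun y => Xf y k) i x
      + ω x i k * pd (fun y => Xf y k) j x)

/-- The Jacobiator of a bivector field `A`; `A` satisfies the Jacobi identity iff it
vanishes for all indices `i j k`. -/
def jac (A : (Fin 4 → ℝ) → Matrix (Fin 4) (Fin 4) ℝ)
    (i j k : Fin 4) (x : Fin 4 → ℝ) : ℝ :=
  ∑ l, (A x l i * pd (fun y => A y j k) l x
      + A x l j * pd (fun y => A y k i) l x
      + A x l k * pd (fun y => A y i j) l x)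

/-- The mixed Schouten bracket expression of two bivector fields `A` and `B`. -/
def mixedSchouten (A B : (Fin 4 → ℝ) → Matrix (Fin 4) (Fin 4) ℝ)
    (i j k : Fin 4) (x : Fin 4 → ℝ) : ℝ :=
  ∑ l, (A x l i * pd (fun y => B y j k) l x
      + A x l j * pd (fun y => B y k i) l x
      + A x l k * pd (fun y => B y i j) l x
      + B x l i * pd (fun y => A y j k) l x
      + B x l j * pd (fun y => A y k i) l x
      + B x l k * pd (fun y => A y i j) l x)

/-- Hénon–Heiles potential `V = q₁ (a q₂² + b q₁²)`. -/
def VHH (a b : ℝ) (x : Fin 4 → ℝ) : ℝ := x 0 * (a * (x 1) ^ 2 + b * (x 0) ^ 2)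

/-- Hénon–Heiles Hamiltonian. -/
def HHH (a b : ℝ) (x : Fin 4 → ℝ) : ℝ := ((x 2) ^ 2 + (x 3) ^ 2) / 2 + VHH a b x

/-- Hénon–Heiles Hamiltonian vector field `X = (p₁, p₂, −∂V/∂q₁, −∂V/∂q₂)`. -/
def XHH (a b : ℝ) (x : Fin 4 → ℝ) : Fin 4 → ℝ :=
  ![x 2, x 3, -(pd (VHH a b) 0 x), -(pd (VHH a b) 1 x)]

/-- The invariant bivector `P̃` of the Hénon–Heiles system. -/
def PtHH (a b : ℝ) (x : Fin 4 → ℝ) : Matrix (Fin 4) (Fin 4) ℝ :=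
  let q1 := x 0; let q2 := x 1; let p1 := x 2; let p2 := x 3
  let e12 := (4 / 3) * (q2 * p1 - q1 * p2)
  let e13 := p1 ^ 2 - p2 ^ 2 - (2 / 3) * a * q1 * q2 ^ 2 + 2 * b * q1 ^ 3
  let e14 := 2 * p1 * p2 + (8 / 3) * a * q1 ^ 2 * q2
  let e23 := 2 * p1 * p2 + (4 / 3) * a * q2 ^ 3 + 4 * b * q1 ^ 2 * q2
  let e24 := p2 ^ 2 - p1 ^ 2 + (2 / 3) * a * q1 * q2 ^ 2 - 2 * b * q1 ^ 3
  let e34 := 4 * a * q1 * q2 * p1 - (2 * a * q2 ^ 2 + 6 * b * q1 ^ 2) * p2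
  !![0, e12, e13, e14;
     -(e12), 0, e23, e24;
     -(e13), -(e23), 0, e34;
     -(e14), -(e24), -(e34), 0]

/-- The invariant 2-form `ω̃` of the Hénon–Heiles system. -/
def OmHH (a b : ℝ) (x : Fin 4 → ℝ) : Matrix (Fin 4) (Fin 4) ℝ :=
  let q1 := x 0; let q2 := x 1; let p1 := x 2; let p2 := x 3
  let w12 := ((a * q2 ^ 2 + 3 * b * q1 ^ 2) / 2) * p2 - a * q1 * q2 * p1
  let w13 := a * q1 * q2 ^ 2 / 6 - b * q1 ^ 3 / 2 - (p1 ^ 2 - p2 ^ 2) / 4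
  let w14 := -(a * q2 ^ 3 / 3 + b * q1 ^ 2 * q2 + p1 * p2 / 2)
  let w23 := -(2 * a * q1 ^ 2 * q2 / 3 + p1 * p2 / 2)
  let w24 := -(a * q1 * q2 ^ 2) / 6 + b * q1 ^ 3 / 2 + (p1 ^ 2 - p2 ^ 2) / 4
  let w34 := (q1 * p2 - q2 * p1) / 3
  !![0, w12, w13, w14;
     -(w12), 0, w23, w24;
     -(w13), -(w23), 0, w34;
     -(w14), -(w24), -(w34), 0]

/-- The bivector `P̂ = H^{2/3} P̃`. -/
def PhatHH (a b : ℝ) (x : Fin 4 → ℝ) : Matrix (Fin 4) (Fin 4) ℝ :=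
  Matrix.of fun i j => (HHH a b x) ^ ((2 : ℝ) / 3) * PtHH a b x i j

/-! For a bivector `A` and a positive function `f`, the Leibniz rule gives
`jac (f^p A) = f^(2p-1) (f · jac A + p · A♯(df) ∧ A)`. With `f = H`, `p = 2/3`, the theorem thus
reduces to the polynomial identity `3 H · jac P̃ + 2 · P̃♯(dH) ∧ P̃ = 0`. Both terms are
alternating in `(i, j, k)`, so it is enough to check it on the four triples `i < j < k`, by direct
computation. -/

section PartialDerivative

variable {f g : (Fin 4 → ℝ) → ℝ} {k : Fin 4} {x : Fin 4 → ℝ}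

lemma pd_const (c : ℝ) : pd (fun _ => c) k x = 0 := by
  simp [pd]

lemma pd_coord (i : Fin 4) : pd (fun y => y i) k x = if i = k then 1 else 0 := by
  have h : fderiv ℝ (fun y : Fin 4 → ℝ => y i) x = ContinuousLinearMap.proj i :=
    (ContinuousLinearMap.proj i : (Fin 4 → ℝ) →L[ℝ] ℝ).hasFDerivAt.fderiv
  simp [pd, h, Pi.single_apply]

lemma pd_add (hf : DifferentiableAt ℝ f x) (hg : DifferentiableAt ℝ g x) :
    pd (fun y => f y + g y) k x = pd f k x + pd g k x := by
  simp [pd, fderiv_fun_add hf hg]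

lemma pd_sub (hf : DifferentiableAt ℝ f x) (hg : DifferentiableAt ℝ g x) :
    pd (fun y => f y - g y) k x = pd f k x - pd g k x := by
  simp [pd, fderiv_fun_sub hf hg]

lemma pd_neg : pd (fun y => -f y) k x = -pd f k x := by
  simp [pd]

lemma pd_mul (hf : DifferentiableAt ℝ f x) (hg : DifferentiableAt ℝ g x) :
    pd (fun y => f y * g y) k x = f x * pd g k x + g x * pd f k x := by
  simp [pd, fderiv_fun_mul hf hg]

lemma pd_div_const (hf : DifferentiableAt ℝ f x) (c : ℝ) :
    pd (fun y => f y / c) k x = pd f k x / c := by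
  simp [pd, div_eq_mul_inv, fderiv_mul_const hf, mul_comm]

lemma pd_pow (hf : DifferentiableAt ℝ f x) (n : ℕ) :
    pd (fun y => f y ^ n) k x = n * f x ^ (n - 1) * pd f k x := by
  have h : HasFDerivAt (fun y => f y ^ n) ((n * f x ^ (n - 1)) • fderiv ℝ f x) x :=
    (hasDerivAt_pow n (f x)).comp_hasFDerivAt x hf.hasFDerivAt
  simp [pd, h.fderiv]

lemma pd_rpow (hf : DifferentiableAt ℝ f x) (hx : f x ≠ 0) (p : ℝ) :
    pd (fun y => f y ^ p) k x = p * f x ^ (p - 1) * pd f k x := by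
  simp [pd, (hf.hasFDerivAt.rpow_const (p := p) (Or.inl hx)).fderiv]

end PartialDerivative

/-- The components `(A♯dg ∧ A)^{ijk}`, where `(A♯dg)^i = Σ_l ∂_l g A^{li}`. -/
def hamWedge (A : (Fin 4 → ℝ) → Matrix (Fin 4) (Fin 4) ℝ) (g : (Fin 4 → ℝ) → ℝ)
    (i j k : Fin 4) (x : Fin 4 → ℝ) : ℝ :=
  ∑ l, pd g l x * (A x l i * A x j k + A x l j * A x k i + A x l k * A x i j)

section Jacobiator

variable {A : (Fin 4 → ℝ) → Matrix (Fin 4) (Fin 4) ℝ} {x : Fin 4 → ℝ}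

lemma jac_cycle (i j k : Fin 4) : jac A j k i x = jac A i j k x :=
  Finset.sum_congr rfl fun _ _ => by ring

lemma hamWedge_cycle (g : (Fin 4 → ℝ) → ℝ) (i j k : Fin 4) :
    hamWedge A g j k i x = hamWedge A g i j k x :=
  Finset.sum_congr rfl fun _ _ => by ring

lemma jac_swap (hA : ∀ y i j, A y j i = -A y i j) (i j k : Fin 4) :
    jac A j i k x = -jac A i j k x := by
  have hpd : ∀ i j l, pd (fun y => A y j i) l x = -pd (fun y => A y i j) l x := by
    intro i j l
    simp only [hA _ i j, pd_neg]
  simp only [jac, hpd k i, hpd j k, hpd i j, ← Finset.sum_neg_distrib]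
  exact Finset.sum_congr rfl fun _ _ => by ring

lemma hamWedge_swap (hA : ∀ y i j, A y j i = -A y i j) (g : (Fin 4 → ℝ) → ℝ) (i j k : Fin 4) :
    hamWedge A g j i k x = -hamWedge A g i j k x := by
  simp only [hamWedge, hA x i k, hA x k j, hA x j i, ← Finset.sum_neg_distrib]
  exact Finset.sum_congr rfl fun _ _ => by ring

lemma jac_smul {f : (Fin 4 → ℝ) → ℝ} (hf : DifferentiableAt ℝ f x)
    (hA : ∀ i j, DifferentiableAt ℝ (fun y => A y i j) x) (i j k : Fin 4) :
    jac (fun y => f y • A y) i j k x = f x ^ 2 * jac A i j k x + f x * hamWedge A f i j k x := by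
  simp only [jac, hamWedge, Matrix.smul_apply, smul_eq_mul, pd_mul hf (hA _ _),
    Finset.mul_sum, ← Finset.sum_add_distrib]
  exact Finset.sum_congr rfl fun _ _ => by ring

lemma jac_rpow_smul {f : (Fin 4 → ℝ) → ℝ} (hf : DifferentiableAt ℝ f x) (hx : 0 < f x)
    (hA : ∀ i j, DifferentiableAt ℝ (fun y => A y i j) x) (p : ℝ) (i j k : Fin 4) :
    jac (fun y => f y ^ p • A y) i j k x
      = f x ^ (2 * p - 1) * (f x * jac A i j k x + p * hamWedge A f i j k x) := by
  have hsq : (f x ^ p) ^ 2 = f x ^ (2 * p - 1) * f x := by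
    rw [← Real.rpow_natCast, ← Real.rpow_mul hx.le, ← Real.rpow_add_one hx.ne']
    ring_nf
  have hprod : f x ^ p * f x ^ (p - 1) = f x ^ (2 * p - 1) := by
    rw [← Real.rpow_add hx]
    ring_nf
  have hW : hamWedge A (fun y => f y ^ p) i j k x
      = p * f x ^ (p - 1) * hamWedge A f i j k x := by
    simp only [hamWedge, pd_rpow hf hx.ne', Finset.mul_sum]
    exact Finset.sum_congr rfl fun _ _ => by ring
  rw [jac_smul (hf.rpow_const (Or.inl hx.ne')) hA, hsq, hW, ← hprod]
  ring

end Jacobiator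

lemma eq_zero_of_alternating {T : Fin 4 → Fin 4 → Fin 4 → ℝ}
    (hswap : ∀ i j k, T j i k = -T i j k) (hcycle : ∀ i j k, T j k i = T i j k)
    (h012 : T 0 1 2 = 0) (h013 : T 0 1 3 = 0) (h023 : T 0 2 3 = 0) (h123 : T 1 2 3 = 0)
    (i j k : Fin 4) : T i j k = 0 := by
  have := hswap i j k; have := hswap j k i; have := hswap k i j
  have := hcycle i j k; have := hcycle j k i
  fin_cases i <;> fin_cases j <;> fin_cases k <;> simp only [Fin.reduceFinMk] at * <;> linarith

section HenonHeiles

variable (a b : ℝ)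

lemma PtHH_antisymm (y : Fin 4 → ℝ) (i j : Fin 4) : PtHH a b y j i = -PtHH a b y i j := by
  fin_cases i <;> fin_cases j <;> simp [PtHH]

lemma differentiableAt_HHH (x : Fin 4 → ℝ) : DifferentiableAt ℝ (HHH a b) x := by
  unfold HHH VHH
  fun_prop

lemma differentiableAt_PtHH (x : Fin 4 → ℝ) (i j : Fin 4) :
    DifferentiableAt ℝ (fun y => PtHH a b y i j) x := by
  fin_cases i <;> fin_cases j <;>
    simp only [PtHH, Matrix.of_apply, Matrix.cons_val', Matrix.cons_val, Matrix.cons_val_fin_one,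
      Fin.reduceFinMk, Fin.isValue] <;>
    fun_prop

lemma pd_HHH (x : Fin 4 → ℝ) (l : Fin 4) :
    pd (HHH a b) l x = ![a * x 1 ^ 2 + 3 * b * x 0 ^ 2, 2 * a * x 0 * x 1, x 2, x 3] l := by
  unfold HHH VHH
  fin_cases l <;>
    simp (disch := fun_prop) [pd_add, pd_mul, pd_div_const, pd_pow, pd_coord, pd_const] <;>
    ring

lemma HHH_mul_jac_PtHH_add_hamWedge_eq_zero (x : Fin 4 → ℝ) (i j k : Fin 4) :
    3 * HHH a b x * jac (PtHH a b) i j k x + 2 * hamWedge (PtHH a b) (HHH a b) i j k x = 0 := by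
  have hA := PtHH_antisymm a b
  refine eq_zero_of_alternating (T := fun i j k => 3 * HHH a b x * jac (PtHH a b) i j k x
    + 2 * hamWedge (PtHH a b) (HHH a b) i j k x)
    (fun i j k => ?_) (fun i j k => ?_) ?_ ?_ ?_ ?_ i j k
  · rw [jac_swap hA, hamWedge_swap hA]
    ring
  · rw [jac_cycle, hamWedge_cycle]
  all_goals
    simp only [jac, hamWedge, Fin.sum_univ_four, pd_HHH, PtHH, Matrix.of_apply, Matrix.cons_val',
      Matrix.cons_val, Matrix.cons_val_fin_one, Fin.isValue]
    simp (disch := fun_prop) only [pd_add, pd_sub, pd_mul, pd_neg, pd_pow, pd_coord, pd_const]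
    simp only [HHH, VHH, Fin.reduceEq, Fin.isValue, if_true, if_false]
    ring

end HenonHeiles

/-- `P̂ = H^{2/3}P̃` satisfies the Jacobi identity on the set `{H > 0}`. -/
theorem statement2 (a b : ℝ) :
    ∀ x : Fin 4 → ℝ, 0 < HHH a b x →
      ∀ i j k : Fin 4, jac (PhatHH a b) i j k x = 0 := by
  intro x hH i j k
  have hPhat : PhatHH a b = fun y => HHH a b y ^ ((2 : ℝ) / 3) • PtHH a b y := rfl
  have hPt := HHH_mul_jac_PtHH_add_hamWedge_eq_zero a b x i j k
  rw [hPhat, jac_rpow_smul (differentiableAt_HHH a b x) hH (differentiableAt_PtHH a b x),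
    show HHH a b x * jac (PtHH a b) i j k x + 2 / 3 * hamWedge (PtHH a b) (HHH a b) i j k x = 0
    by linarith, mul_zero]

end
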